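/- Let $c \in (0,1)$, $\varepsilon > 0$, $s > 0$, and let $\lambda_1,\dots,\lambda_k \ge 0$ and linear maps $B_i : \mathbb{R}^n \to \mathbb{R}^{n_i}$ satisfy $B_i B_i^* = I_{n_i}$ for all $i$. Let $f_i : \mathbb{R}^{n_i} \to [\varepsilon,1]$ and $h : \mathbb{R}^n \to [\varepsilon,1]$ satisfy $\sum_i \lambda_i \Phi_c^{-1}(f_i(x_i)) \le \Phi_c^{-1}(h(\sum_i \lambda_i B_i^* x_i))$ for all $x_i$. Define the sup-convolutions $\Phi_c^{-1}(f_i^s(x)) := \sup_y\{\Phi_c^{-1}(f_i(y)) - s^{-1}\|x-y\|\}$ and $\Phi_c^{-1}(h^s(x)) := \sup_y\{\Phi_c^{-1}(h(y)) - s^{-1}\|x-y\|\}$. Then $f_i^s$ and $h^s$ take values in $[\varepsilon,1]$, the functions $\Phi_c^{-1}(f_i^s)$ and $\Phi_c^{-1}(h^s)$ are $s^{-1}$-Lipschitz, and $\sum_i \lambda_i \Phi_c^{-1}(f_i^s(x_i)) \le \Phi_c^{-1}(h^s(\sum_i \lambda_i B_i^* x_i))$ for all $x_i \in \mathbb{R}^{n_i}$.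 -/

import Mathlib

/-!
`Φ_c⁻¹` is an increasing bijection of `[ε, 1]` onto `[Φ_c⁻¹(ε), 0]`, because `Φ` is a
continuous strictly increasing bijection of `ℝ` onto `(0, 1)`. A sup-convolution with
`K ‖·‖`, `K ≥ 0`, is `K`-Lipschitz and keeps its values in any interval `[a, b]` holding those
of the original function, so `f_i^s` and `h^s` exist with values in `[ε, 1]`. For the
inequality, fix `y_i`: the hypothesis at `y` and `‖∑ λ_i B_i^* (x_i - y_i)‖ ≤ ∑ λ_i ‖x_i - y_i‖`
give `∑ λ_i (Φ_c⁻¹(f_i(y_i)) - s⁻¹ ‖x_i - y_i‖) ≤ Φ_c⁻¹(h^s(∑ λ_i B_i^* x_i))`, and the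
supremum over each `y_i` separately is the left-hand side of the claim.
-/

open MeasureTheory Real Set
open scoped Pointwise

/-- The standard Gaussian CDF. -/
noncomputable def Phi (x : ℝ) : ℝ :=
  ∫ z in Set.Iic x, Real.exp (-z ^ 2 / 2) / Real.sqrt (2 * Real.pi)

/-- The inverse of the standard Gaussian CDF. -/
noncomputable def PhiInv : ℝ → ℝ := Function.invFun Phi

/-- The standard Gaussian measure on `ℝ^n`. -/
noncomputable def stdGaussian (n : ℕ) : Measure (EuclideanSpace ℝ (Fin n)) :=
  volume.withDensity
    (fun x => ENNReal.ofReal ((2 * Real.pi) ^ (-(n : ℝ) / 2) * Real.exp (-‖x‖ ^ 2 / 2)))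

/-- `Φ_c⁻¹(x) := Φ⁻¹(cx) - Φ⁻¹(c)`. -/
noncomputable def phiInvC (c x : ℝ) : ℝ := PhiInv (c * x) - PhiInv c

open Filter Topology ProbabilityTheory

section Primitive

variable {g : ℝ → ℝ}

theorem strictMono_integral_Iic (hg : Integrable g) (hpos : ∀ x, 0 < g x) :
    StrictMono fun x => ∫ z in Iic x, g z := by
  intro a b hab
  have hsplit : ∫ z in Iic b, g z = (∫ z in Iic a, g z) + ∫ z in Ioc a b, g z := by
    rw [← setIntegral_union (Iic_disjoint_Ioc le_rfl) measurableSet_Ioc hg.integrableOn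
      hg.integrableOn, Iic_union_Ioc_eq_Iic hab.le]
  have hIoc : 0 < ∫ z in Ioc a b, g z := by
    rw [setIntegral_pos_iff_support_of_nonneg_ae (.of_forall fun z => (hpos z).le)
      hg.integrableOn, Function.support_eq_univ fun z => (hpos z).ne', univ_inter]
    simp [hab]
  simp only
  linarith

theorem continuous_integral_Iic (hg : Integrable g) :
    Continuous fun x => ∫ z in Iic x, g z := by
  have hprim :
      (fun x => ∫ z in Iic x, g z) = fun x => (∫ z in Iic 0, g z) + ∫ z in 0..x, g z := by
    funext x
    rw [← intervalIntegral.integral_Iic_sub_Iic hg.integrableOn hg.integrableOn]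
    ring
  rw [hprim]
  exact continuous_const.add (hg.continuous_primitive 0)

theorem tendsto_integral_Iic_atTop (hg : Integrable g) :
    Tendsto (fun x => ∫ z in Iic x, g z) atTop (𝓝 (∫ z, g z)) :=
  (aecover_Iic tendsto_id).integral_tendsto_of_countably_generated hg

theorem Ioo_subset_range_integral_Iic (hg : Integrable g) :
    Ioo 0 (∫ z, g z) ⊆ range fun x => ∫ z in Iic x, g z := fun _ ht =>
  intermediate_value_univ₂_eventually₂ (continuous_integral_Iic hg) continuous_const
    ((tendsto_integral_Iic_zero tendsto_id).eventually_le_const ht.1)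
    ((tendsto_integral_Iic_atTop hg).eventually_const_le ht.2)

end Primitive

theorem Phi_eq_integral_gaussianPDFReal : Phi = fun x => ∫ z in Iic x, gaussianPDFReal 0 1 z := by
  funext x
  simp [Phi, gaussianPDFReal, div_eq_inv_mul]

theorem strictMono_Phi : StrictMono Phi := by
  rw [Phi_eq_integral_gaussianPDFReal]
  exact strictMono_integral_Iic
    (integrable_gaussianPDFReal 0 1) fun x => gaussianPDFReal_pos 0 1 x one_ne_zero

theorem Ioo_subset_range_Phi : Ioo 0 1 ⊆ range Phi := by
  rw [Phi_eq_integral_gaussianPDFReal, ← integral_gaussianPDFReal_eq_one 0 one_ne_zero]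
  exact Ioo_subset_range_integral_Iic (integrable_gaussianPDFReal 0 1)

theorem PhiInv_Phi (x : ℝ) : PhiInv (Phi x) = x :=
  Function.leftInverse_invFun strictMono_Phi.injective x

theorem Phi_PhiInv {t : ℝ} (ht : t ∈ Ioo 0 1) : Phi (PhiInv t) = t :=
  Function.invFun_eq (Ioo_subset_range_Phi ht)

theorem monotoneOn_PhiInv : MonotoneOn PhiInv (Ioo 0 1) := fun a ha b hb hab =>
  strictMono_Phi.le_iff_le.1 (by rwa [Phi_PhiInv ha, Phi_PhiInv hb])

section PhiInvC

variable {c ε : ℝ}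

theorem mul_mem_Ioo_zero_one (hc : c ∈ Ioo 0 1) {x : ℝ} (hx : x ∈ Ioc 0 1) :
    c * x ∈ Ioo 0 1 :=
  ⟨mul_pos hc.1 hx.1, (mul_le_of_le_one_right hc.1.le hx.2).trans_lt hc.2⟩

theorem phiInvC_one (c : ℝ) : phiInvC c 1 = 0 := by
  simp [phiInvC]

theorem monotoneOn_phiInvC (hc : c ∈ Ioo 0 1) : MonotoneOn (phiInvC c) (Ioc 0 1) :=
  fun _ ha _ hb hab => sub_le_sub_right (monotoneOn_PhiInv (mul_mem_Ioo_zero_one hc ha)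
    (mul_mem_Ioo_zero_one hc hb) (mul_le_mul_of_nonneg_left hab hc.1.le)) _

theorem mapsTo_phiInvC (hc : c ∈ Ioo 0 1) (hε : 0 < ε) :
    MapsTo (phiInvC c) (Icc ε 1) (Icc (phiInvC c ε) 0) := by
  intro x hx
  have hε1 : ε ≤ 1 := hx.1.trans hx.2
  rw [← phiInvC_one c]
  exact ⟨monotoneOn_phiInvC hc ⟨hε, hε1⟩ ⟨hε.trans_le hx.1, hx.2⟩ hx.1,
    monotoneOn_phiInvC hc ⟨hε.trans_le hx.1, hx.2⟩ ⟨one_pos, le_rfl⟩ hx.2⟩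

-- The preimage of `v` is `Φ(v + Φ⁻¹(c)) / c`.
theorem surjOn_phiInvC (hc : c ∈ Ioo 0 1) (hε : 0 < ε) (hε1 : ε ≤ 1) :
    SurjOn (phiInvC c) (Icc ε 1) (Icc (phiInvC c ε) 0) := by
  intro v hv
  have hcε := mul_mem_Ioo_zero_one hc ⟨hε, hε1⟩
  obtain ⟨hv₁, hv₂⟩ : PhiInv (c * ε) ≤ v + PhiInv c ∧ v + PhiInv c ≤ PhiInv c := by
    unfold phiInvC at hv
    constructor <;> linarith [hv.1, hv.2]
  have hlow : c * ε ≤ Phi (v + PhiInv c) :=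
    (Phi_PhiInv hcε).symm.trans_le (strictMono_Phi.monotone hv₁)
  have hupp : Phi (v + PhiInv c) ≤ c := (strictMono_Phi.monotone hv₂).trans_eq (Phi_PhiInv hc)
  refine ⟨Phi (v + PhiInv c) / c, ⟨(le_div_iff₀' hc.1).2 hlow, (div_le_one hc.1).2 hupp⟩, ?_⟩
  simp [phiInvC, mul_div_cancel₀ _ hc.1.ne', PhiInv_Phi]

end PhiInvC

section SupConv

variable {E : Type*} [SeminormedAddCommGroup E] {K : ℝ} {φ : E → ℝ}

noncomputable def supConv (K : ℝ) (φ : E → ℝ) (x : E) : ℝ :=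
  ⨆ y, φ y - K * ‖x - y‖

theorem bddAbove_range_sub_mul_norm (hK : 0 ≤ K) (hφ : BddAbove (range φ)) (x : E) :
    BddAbove (range fun y => φ y - K * ‖x - y‖) := by
  obtain ⟨M, hM⟩ := hφ
  refine ⟨M, forall_mem_range.2 fun y => ?_⟩
  have := hM (mem_range_self y)
  have := mul_nonneg hK (norm_nonneg (x - y))
  linarith

theorem le_supConv (hK : 0 ≤ K) (hφ : BddAbove (range φ)) (x y : E) :
    φ y - K * ‖x - y‖ ≤ supConv K φ x :=
  le_ciSup (bddAbove_range_sub_mul_norm hK hφ x) y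

theorem self_le_supConv (hK : 0 ≤ K) (hφ : BddAbove (range φ)) (x : E) : φ x ≤ supConv K φ x := by
  simpa using le_supConv hK hφ x x

theorem supConv_le (hK : 0 ≤ K) {M : ℝ} (hM : ∀ y, φ y ≤ M) (x : E) : supConv K φ x ≤ M :=
  ciSup_le fun y => by nlinarith [hM y, norm_nonneg (x - y)]

theorem supConv_mem_Icc (hK : 0 ≤ K) {a b : ℝ} (hφ : ∀ y, φ y ∈ Icc a b) (x : E) :
    supConv K φ x ∈ Icc a b :=
  have hbdd : BddAbove (range φ) := ⟨b, forall_mem_range.2 fun y => (hφ y).2⟩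
  ⟨(hφ x).1.trans (self_le_supConv hK hbdd x), supConv_le hK (fun y => (hφ y).2) x⟩

theorem lipschitzWith_supConv (hK : 0 ≤ K) (hφ : BddAbove (range φ)) :
    LipschitzWith K.toNNReal (supConv K φ) := by
  refine LipschitzWith.of_le_add_mul' K fun x x' => ciSup_le fun y => ?_
  have htri : ‖x' - y‖ ≤ dist x x' + ‖x - y‖ := by
    simpa [dist_comm x, dist_eq_norm] using norm_sub_le_norm_sub_add_norm_sub x' x y
  nlinarith [le_supConv hK hφ x' y, mul_le_mul_of_nonneg_left htri hK]

end SupConv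

theorem sum_mul_ciSup_le {ι : Type*} [Fintype ι] {α : ι → Type*} [∀ i, Nonempty (α i)]
    {w : ι → ℝ} (hw : ∀ i, 0 ≤ w i) {g : ∀ i, α i → ℝ} {b : ℝ}
    (h : ∀ y : ∀ i, α i, ∑ i, w i * g i (y i) ≤ b) :
    ∑ i, w i * ⨆ a, g i a ≤ b := by
  refine le_of_forall_pos_le_add fun δ hδ => ?_
  set W := ∑ i, w i
  have hW : 0 ≤ W := Finset.sum_nonneg fun i _ => hw i
  have hη : 0 < δ / (W + 1) := div_pos hδ (by linarith)
  choose y hy using fun i => exists_lt_of_lt_ciSup (sub_lt_self (⨆ a, g i a) hη)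
  calc ∑ i, w i * ⨆ a, g i a
      ≤ ∑ i, (w i * g i (y i) + δ / (W + 1) * w i) :=
        Finset.sum_le_sum fun i _ => by nlinarith [hy i, hw i]
    _ = ∑ i, w i * g i (y i) + δ / (W + 1) * W := by
        rw [Finset.sum_add_distrib, Finset.mul_sum]
    _ ≤ b + δ := by
        have : δ / (W + 1) * W ≤ δ := by
          rw [div_mul_eq_mul_div, div_le_iff₀ (by linarith)]
          nlinarith
        linarith [h y]

section WeightedSum

variable {ι : Type*} [Fintype ι] {E : ι → Type*} [∀ i, SeminormedAddCommGroup (E i)]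
  {F : Type*} [SeminormedAddCommGroup F] [NormedSpace ℝ F] {w : ι → ℝ} {A : ∀ i, E i → F}

theorem norm_sum_smul_sub_sum_smul_le (hw : ∀ i, 0 ≤ w i) (hA : ∀ i, LipschitzWith 1 (A i))
    (x y : ∀ i, E i) :
    ‖∑ i, w i • A i (x i) - ∑ i, w i • A i (y i)‖ ≤ ∑ i, w i * ‖x i - y i‖ := by
  rw [← Finset.sum_sub_distrib]
  refine (norm_sum_le _ _).trans (Finset.sum_le_sum fun i _ => ?_)
  rw [← smul_sub, norm_smul, Real.norm_of_nonneg (hw i)]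
  exact mul_le_mul_of_nonneg_left (by simpa [dist_eq_norm] using (hA i).dist_le_mul (x i) (y i))
    (hw i)

theorem sum_mul_supConv_le_supConv {K : ℝ} (hK : 0 ≤ K) (hw : ∀ i, 0 ≤ w i)
    (hA : ∀ i, LipschitzWith 1 (A i)) {φ : ∀ i, E i → ℝ} {ψ : F → ℝ} (hψ : BddAbove (range ψ))
    (h : ∀ x : ∀ i, E i, ∑ i, w i * φ i (x i) ≤ ψ (∑ i, w i • A i (x i))) (x : ∀ i, E i) :
    ∑ i, w i * supConv K (φ i) (x i) ≤ supConv K ψ (∑ i, w i • A i (x i)) := by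
  refine sum_mul_ciSup_le hw fun y => ?_
  calc ∑ i, w i * (φ i (y i) - K * ‖x i - y i‖)
      = ∑ i, w i * φ i (y i) - K * ∑ i, w i * ‖x i - y i‖ := by
        rw [Finset.mul_sum, ← Finset.sum_sub_distrib]
        exact Finset.sum_congr rfl fun i _ => by ring
    _ ≤ ψ (∑ i, w i • A i (y i)) - K * ‖∑ i, w i • A i (x i) - ∑ i, w i • A i (y i)‖ :=
        sub_le_sub (h y) (mul_le_mul_of_nonneg_left (norm_sum_smul_sub_sum_smul_le hw hA x y) hK)
    _ ≤ supConv K ψ (∑ i, w i • A i (x i)) := le_supConv hK hψ _ _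

end WeightedSum

theorem bddAbove_range_phiInvC_comp {E : Type*} {c ε : ℝ} (hc : c ∈ Ioo 0 1) (hε : 0 < ε)
    {g : E → ℝ} (hg : ∀ x, g x ∈ Icc ε 1) : BddAbove (range fun x => phiInvC c (g x)) :=
  ⟨0, forall_mem_range.2 fun x => (mapsTo_phiInvC hc hε (hg x)).2⟩

theorem exists_phiInvC_eq_supConv {E : Type*} [SeminormedAddCommGroup E] {c ε K : ℝ}
    (hc : c ∈ Ioo 0 1) (hε : 0 < ε) (hε1 : ε ≤ 1) (hK : 0 ≤ K) {g : E → ℝ}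
    (hg : ∀ x, g x ∈ Icc ε 1) :
    ∃ gS : E → ℝ, (∀ x, gS x ∈ Icc ε 1) ∧
      ∀ x, phiInvC c (gS x) = supConv K (fun y => phiInvC c (g y)) x := by
  choose gS hgS using fun x =>
    surjOn_phiInvC hc hε hε1 (supConv_mem_Icc hK (fun y => mapsTo_phiInvC hc hε (hg y)) x)
  exact ⟨gS, fun x => (hgS x).1, fun x => (hgS x).2⟩

theorem ContinuousLinearMap.isometry_adjoint_of_comp_adjoint_eq_id {𝕜 H K : Type*} [RCLike 𝕜]
    [NormedAddCommGroup H] [InnerProductSpace 𝕜 H] [CompleteSpace H]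
    [NormedAddCommGroup K] [InnerProductSpace 𝕜 K] [CompleteSpace K] {B : H →L[𝕜] K}
    (hB : B.comp (adjoint B) = ContinuousLinearMap.id 𝕜 K) : Isometry (adjoint B) := by
  rw [isometry_iff_adjoint_comp_self, adjoint_adjoint, hB, one_def]

/-- Sup-convolution regularization preserves the hypothesis of the Gaussian reverse
Brascamp-Lieb inequality: the regularized functions take values in `[ε,1]`, the
`Φ_c⁻¹`-transforms are `s⁻¹`-Lipschitz, and the multilinear inequality is preserved. -/
theorem stmt13 (c ε s : ℝ) (hc : c ∈ Set.Ioo (0:ℝ) 1) (hε : 0 < ε) (hε1 : ε ≤ 1) (hs : 0 < s)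
    (k n : ℕ) (m : Fin k → ℕ) (lam : Fin k → ℝ) (hlam : ∀ i, 0 ≤ lam i)
    (B : ∀ i, EuclideanSpace ℝ (Fin n) →L[ℝ] EuclideanSpace ℝ (Fin (m i)))
    (hB : ∀ i, (B i).comp (ContinuousLinearMap.adjoint (B i)) = ContinuousLinearMap.id ℝ _)
    (f : ∀ i, EuclideanSpace ℝ (Fin (m i)) → ℝ) (h : EuclideanSpace ℝ (Fin n) → ℝ)
    (hf : ∀ i x, f i x ∈ Set.Icc ε 1) (hh : ∀ x, h x ∈ Set.Icc ε 1)
    (hyp : ∀ x : ∀ i, EuclideanSpace ℝ (Fin (m i)),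
      ∑ i, lam i * phiInvC c (f i (x i))
        ≤ phiInvC c (h (∑ i, lam i • (ContinuousLinearMap.adjoint (B i)) (x i))))
    (G : ∀ i, EuclideanSpace ℝ (Fin (m i)) → ℝ) (Gh : EuclideanSpace ℝ (Fin n) → ℝ)
    (hG : ∀ i x, G i x = ⨆ y, (phiInvC c (f i y) - s⁻¹ * ‖x - y‖))
    (hGh : ∀ x, Gh x = ⨆ y, (phiInvC c (h y) - s⁻¹ * ‖x - y‖)) :
    (∀ i, ∃ fS : EuclideanSpace ℝ (Fin (m i)) → ℝ,
        (∀ x, fS x ∈ Set.Icc ε 1) ∧ ∀ x, phiInvC c (fS x) = G i x)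
      ∧ (∃ hS : EuclideanSpace ℝ (Fin n) → ℝ,
          (∀ x, hS x ∈ Set.Icc ε 1) ∧ ∀ x, phiInvC c (hS x) = Gh x)
      ∧ (∀ i, LipschitzWith (Real.toNNReal s⁻¹) (G i))
      ∧ LipschitzWith (Real.toNNReal s⁻¹) Gh
      ∧ ∀ x : ∀ i, EuclideanSpace ℝ (Fin (m i)),
          ∑ i, lam i * G i (x i)
            ≤ Gh (∑ i, lam i • (ContinuousLinearMap.adjoint (B i)) (x i)) := by
  have hK : 0 ≤ s⁻¹ := inv_nonneg.2 hs.le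
  obtain rfl : G = fun i => supConv s⁻¹ fun y => phiInvC c (f i y) :=
    funext fun i => funext (hG i)
  obtain rfl : Gh = supConv s⁻¹ fun y => phiInvC c (h y) := funext hGh
  exact ⟨fun i => exists_phiInvC_eq_supConv hc hε hε1 hK (hf i),
    exists_phiInvC_eq_supConv hc hε hε1 hK hh,
    fun i => lipschitzWith_supConv hK (bddAbove_range_phiInvC_comp hc hε (hf i)),
    lipschitzWith_supConv hK (bddAbove_range_phiInvC_comp hc hε hh),
    sum_mul_supConv_le_supConv hK hlam
      (fun i => (ContinuousLinearMap.isometry_adjoint_of_comp_adjoint_eq_id (hB i)).lipschitz)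
      (bddAbove_range_phiInvC_comp hc hε hh) hyp⟩
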